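/- arXiv:2604.25071 — 2 statements merged into one kernel-verified Lean document; each statement's English description precedes it below -/
import Mathlib

section
/- Fix bit strings v, v' ∈ {0,1}^n with Hamming distance at most t, and let k ≤ n - t. If a subset μ ⊆ [n] of size k is sampled uniformly at random (without replacement), then the probability that v and v' agree on all coordinates in μ is at least (1 - t/(n-k))^k. -/
/-!
If `d ≤ t` is the Hamming distance, the good event is that `μ` is a `k`-subset of the `n - d`
coordinates where `v` and `v'` agree, so its probability is
`C(n-d, k) / C(n, k) ≥ C(n-t, k) / C(n, k) = ∏_{i<k} (1 - t/(n-i))`,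
and each factor is at least `1 - t/(n-k)`.
-/

open Finset

theorem Finset.filter_powersetCard_forall_mem {α : Type*} (s : Finset α) (p : α → Prop)
    [DecidablePred p] [DecidablePred fun μ : Finset α => ∀ i ∈ μ, p i] (k : ℕ) :
    (s.powersetCard k).filter (fun μ => ∀ i ∈ μ, p i) = (s.filter p).powersetCard k := by
  ext μ
  simp only [mem_filter, mem_powersetCard, subset_iff]
  grind

theorem one_sub_div_le_div_sub {n t k i : ℝ} (ht : 0 ≤ t) (htk : t ≤ n - k) (hik : i ≤ k)
    (hin : i < n) :
    1 - t / (n - k) ≤ (n - t - i) / (n - i) := by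
  have hfactor : (n - t - i) / (n - i) = 1 - t / (n - i) := by
    field_simp [(sub_pos.2 hin).ne']
    ring
  rw [hfactor]
  rcases (ht.trans htk).eq_or_lt with hnk | hnk
  · simp [le_antisymm (hnk ▸ htk) ht]
  · gcongr

theorem Nat.choose_div_choose_eq_prod_range (n m k : ℕ) :
    ((m.choose k : ℝ) / n.choose k) = ∏ i ∈ range k, ((m - i : ℕ) : ℝ) / (n - i : ℕ) := by
  rw [prod_div_distrib, ← Nat.cast_prod, ← Nat.cast_prod, ← Nat.descFactorial_eq_prod_range,
    ← Nat.descFactorial_eq_prod_range, Nat.descFactorial_eq_factorial_mul_choose,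
    Nat.descFactorial_eq_factorial_mul_choose, Nat.cast_mul, Nat.cast_mul,
    mul_div_mul_left _ _ (by positivity)]

theorem one_sub_div_pow_le_choose_div_choose {n t k : ℕ} (h : k ≤ n - t) :
    (1 - (t : ℝ) / (n - k)) ^ k ≤ ((n - t).choose k : ℝ) / n.choose k := by
  -- the subtraction in `h` truncates, so `k = 0` admits `t > n`
  rcases k.eq_zero_or_pos with rfl | hk
  · simp
  have hkt : k + t ≤ n := by omega
  have htk : (t : ℝ) ≤ n - k := by
    rw [le_sub_iff_add_le, add_comm]
    exact_mod_cast hkt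
  have hpow : (1 - (t : ℝ) / (n - k)) ^ k = ∏ _i ∈ range k, (1 - (t : ℝ) / (n - k)) := by
    rw [prod_const, card_range]
  rw [Nat.choose_div_choose_eq_prod_range, hpow]
  refine prod_le_prod (fun _ _ => ?_) (fun i hi => ?_)
  · exact sub_nonneg.2 (div_le_one_of_le₀ htk ((Nat.cast_nonneg t).trans htk))
  · have hik : i < k := mem_range.1 hi
    rw [Nat.cast_sub (by omega), Nat.cast_sub (by omega), Nat.cast_sub (by omega)]
    exact one_sub_div_le_div_sub (by positivity) htk (by exact_mod_cast hik.le)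
      (by exact_mod_cast (by omega : i < n))

/-- If `v, v' ∈ {0,1}^n` have Hamming distance at most `t` and `k ≤ n - t`,
then a uniformly random `k`-subset `μ` of `[n]` satisfies
`Pr[v and v' agree on all coordinates in μ] ≥ (1 - t/(n-k))^k`.
The probability is expressed as a ratio of counts of `k`-subsets. -/
theorem stmt6 (n t k : ℕ) (v v' : Fin n → Bool)
    (hdist : (univ.filter (fun i => v i ≠ v' i)).card ≤ t)
    (hk : k ≤ n - t) :
    ((1 : ℝ) - (t : ℝ) / ((n : ℝ) - (k : ℝ))) ^ k ≤
      ((((univ : Finset (Fin n)).powersetCard k).filter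
          (fun μ => ∀ i ∈ μ, v i = v' i)).card : ℝ) /
        (((univ : Finset (Fin n)).powersetCard k).card : ℝ) := by
  set d := (univ.filter (fun i => v i ≠ v' i)).card
  have hagree : (univ.filter (fun i => v i = v' i)).card = n - d := by
    have hsplit : (univ.filter (fun i => v i = v' i)).card + d = n := by
      simpa using card_filter_add_card_filter_not (s := univ) (fun i => v i = v' i)
    omega
  rw [filter_powersetCard_forall_mem, card_powersetCard, card_powersetCard, hagree, card_univ,
    Fintype.card_fin]
  calc _ ≤ ((n - t).choose k : ℝ) / n.choose k := one_sub_div_pow_le_choose_div_choose hk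
    _ ≤ ((n - d).choose k : ℝ) / n.choose k := by gcongr
end

section
/- Fix bit strings v, v' ∈ {0,1}^n with Hamming distance at most t, with k ≤ n - t, and sample m independent uniform k-subsets μ_1,...,μ_m of [n]. Then the probability that v and v' disagree on some coordinate of every μ_i is at most (1 - (1 - t/(n-k))^k)^m. -/
open Finset
open scoped Classical

lemma choose_ratio (n d k : ℕ) (h : d + k ≤ n) :
    ((n.choose k : ℝ)) * ((n:ℝ) - d - k)^k ≤ (((n-d).choose k : ℝ)) * ((n:ℝ) - k)^k := by
  induction k with
  | zero => simp
  | succ k ih =>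
    have hdk : d + k ≤ n := by omega
    have ih := ih hdk
    have hkn : k < n := by omega
    have hdkn : d + k < n := by omega
    -- real abbreviations
    set a : ℝ := (n:ℝ) - k with ha
    set b : ℝ := (n:ℝ) - d - k with hb
    have hb1 : (1:ℝ) ≤ b := by
      have : (d + k + 1 : ℝ) ≤ (n : ℝ) := by exact_mod_cast h
      simp [hb]; linarith
    have hba : b ≤ a := by simp [ha, hb]
    have ha1 : (1:ℝ) ≤ a := le_trans hb1 hba
    -- choose recurrences
    have hc1 : (n.choose (k+1) : ℝ) * (k+1) = (n.choose k : ℝ) * a := by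
      have := Nat.choose_succ_right_eq n k
      have hcast : ((n - k : ℕ) : ℝ) = a := by
        simp [ha]; push_cast [Nat.cast_sub hkn.le]; ring
      calc (n.choose (k+1) : ℝ) * (k+1) = ((n.choose (k+1) * (k+1) : ℕ) : ℝ) := by push_cast; ring
        _ = ((n.choose k * (n - k) : ℕ) : ℝ) := by rw [this]
        _ = (n.choose k : ℝ) * a := by push_cast [hcast]; ring
    have hc2 : ((n-d).choose (k+1) : ℝ) * (k+1) = ((n-d).choose k : ℝ) * b := by
      have h2 := Nat.choose_succ_right_eq (n-d) k
      have hcast : ((n - d - k : ℕ) : ℝ) = b := by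
        simp [hb]; push_cast [Nat.cast_sub (show k ≤ n - d by omega), Nat.cast_sub (show d ≤ n by omega)]; ring
      calc ((n-d).choose (k+1) : ℝ) * (k+1) = (((n-d).choose (k+1) * ((k+1)) : ℕ) : ℝ) := by push_cast; ring
        _ = (((n-d).choose k * (n - d - k) : ℕ) : ℝ) := by rw [h2]
        _ = ((n-d).choose k : ℝ) * b := by push_cast [hcast]; ring
    -- goal after scaling
    have key : (b-1)*a ≤ (a-1)*b := by nlinarith
    have hb1' : (0:ℝ) ≤ b - 1 := by linarith
    have hpow : ((b-1)*a)^(k+1) ≤ ((a-1)*b)^(k+1) :=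
      pow_le_pow_left₀ (by nlinarith) key _
    have hCpos : (0:ℝ) ≤ ((n-d).choose k : ℝ) := by positivity
    have hbpos : (0:ℝ) < b := by linarith
    have main : (n.choose k : ℝ) * a * (b-1)^(k+1) ≤ ((n-d).choose k : ℝ) * b * (a-1)^(k+1) := by
      have h1 : b^k * ((n.choose k : ℝ) * a * (b-1)^(k+1))
          ≤ (a * (b-1)^(k+1)) * (((n-d).choose k : ℝ) * a^k) := by
        have := mul_le_mul_of_nonneg_left ih (show (0:ℝ) ≤ a * (b-1)^(k+1) by positivity)
        calc b^k * ((n.choose k : ℝ) * a * (b-1)^(k+1))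
            = (a * (b-1)^(k+1)) * ((n.choose k : ℝ) * b^k) := by ring
          _ ≤ (a * (b-1)^(k+1)) * (((n-d).choose k : ℝ) * a^k) := this
      have h2 : (a * (b-1)^(k+1)) * (((n-d).choose k : ℝ) * a^k)
          ≤ b^k * (((n-d).choose k : ℝ) * b * (a-1)^(k+1)) := by
        calc (a * (b-1)^(k+1)) * (((n-d).choose k : ℝ) * a^k)
            = ((n-d).choose k : ℝ) * (((b-1)*a)^(k+1)) := by rw [mul_pow]; ring
          _ ≤ ((n-d).choose k : ℝ) * (((a-1)*b)^(k+1)) := by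
              exact mul_le_mul_of_nonneg_left hpow hCpos
          _ = b^k * (((n-d).choose k : ℝ) * b * (a-1)^(k+1)) := by rw [mul_pow]; ring
      have := le_trans h1 h2
      exact le_of_mul_le_mul_left this (by positivity)
    -- convert to goal
    have hk1 : (0:ℝ) < (k+1 : ℝ) := by positivity
    have hgoal : (n.choose (k+1) : ℝ) * (b-1)^(k+1) * (k+1)
        ≤ ((n-d).choose (k+1) : ℝ) * (a-1)^(k+1) * (k+1) := by
      calc (n.choose (k+1) : ℝ) * (b-1)^(k+1) * (k+1)
          = ((n.choose (k+1) : ℝ) * (k+1)) * (b-1)^(k+1) := by ring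
        _ = (n.choose k : ℝ) * a * (b-1)^(k+1) := by rw [hc1]
        _ ≤ ((n-d).choose k : ℝ) * b * (a-1)^(k+1) := main
        _ = (((n-d).choose (k+1) : ℝ) * (k+1)) * (a-1)^(k+1) := by rw [hc2]
        _ = ((n-d).choose (k+1) : ℝ) * (a-1)^(k+1) * (k+1) := by ring
    have := le_of_mul_le_mul_right hgoal hk1
    have heq1 : (n:ℝ) - d - (k+1:ℕ) = b - 1 := by push_cast [hb]; ring
    have heq2 : (n:ℝ) - (k+1:ℕ) = a - 1 := by push_cast [ha]; ring
    rw [heq1, heq2]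
    exact this

/-- If `v, v' ∈ {0,1}^n` have Hamming distance at most `t`, `k ≤ n - t`, and
`m` independent uniformly random `k`-subsets `μ_1, ..., μ_m` of `[n]` are
sampled, then the probability that `v` and `v'` disagree on some coordinate of
every `μ_i` is at most `(1 - (1 - t/(n-k))^k)^m`. The probability is a ratio
of counts over all tuples of `k`-subsets. -/
theorem stmt7 (n t k m : ℕ) (v v' : Fin n → Bool)
    (hdist : (univ.filter (fun i => v i ≠ v' i)).card ≤ t)
    (hk : k ≤ n - t) :
    (((univ : Finset (Fin m → Finset (Fin n))).filter
        (fun μ => (∀ i, (μ i).card = k) ∧ ∀ i, ∃ j ∈ μ i, v j ≠ v' j)).card : ℝ) /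
      ((((univ : Finset (Fin n)).powersetCard k).card : ℝ) ^ m)
      ≤ (1 - ((1 : ℝ) - (t : ℝ) / ((n : ℝ) - (k : ℝ))) ^ k) ^ m := by
  classical
  set D : Finset (Fin n) := univ.filter (fun i => v i ≠ v' i) with hD
  set d : ℕ := D.card with hd
  have hkn : k ≤ n := le_trans hk (Nat.sub_le n t)
  set C : ℕ := ((univ : Finset (Fin n)).powersetCard k).card with hC
  have hCval : C = n.choose k := by
    rw [hC, Finset.card_powersetCard]; simp
  have hCpos : 0 < C := by rw [hCval]; exact Nat.choose_pos hkn
  -- numerator = A ^ m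
  set A : ℕ := ((univ : Finset (Fin n)).powersetCard k).filter
      (fun s => ∃ j ∈ s, v j ≠ v' j) |>.card with hA
  have hnum : ((univ : Finset (Fin m → Finset (Fin n))).filter
        (fun μ => (∀ i, (μ i).card = k) ∧ ∀ i, ∃ j ∈ μ i, v j ≠ v' j)).card = A ^ m := by
    have hset : (univ : Finset (Fin m → Finset (Fin n))).filter
        (fun μ => (∀ i, (μ i).card = k) ∧ ∀ i, ∃ j ∈ μ i, v j ≠ v' j)
        = Fintype.piFinset (fun _ : Fin m =>
            ((univ : Finset (Fin n)).powersetCard k).filter (fun s => ∃ j ∈ s, v j ≠ v' j)) := by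
      ext μ
      simp only [mem_filter, mem_univ, true_and, Fintype.mem_piFinset,
        Finset.mem_powersetCard_univ]
      constructor
      · rintro ⟨h1, h2⟩ i; exact ⟨h1 i, h2 i⟩
      · intro h; exact ⟨fun i => (h i).1, fun i => (h i).2⟩
    rw [hset, Fintype.card_piFinset]
    simp [hA]
  -- A + B = C
  have hAB : A + (n - d).choose k = C := by
    have h1 := Finset.card_filter_add_card_filter_not
      (s := (univ : Finset (Fin n)).powersetCard k)
      (p := fun s => ∃ j ∈ s, v j ≠ v' j)
    have hB : ((univ : Finset (Fin n)).powersetCard k).filter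
        (fun s => ¬ ∃ j ∈ s, v j ≠ v' j) = Dᶜ.powersetCard k := by
      ext s
      simp only [mem_filter, Finset.mem_powersetCard_univ, Finset.mem_powersetCard, hD,
        Finset.subset_univ, true_and]
      constructor
      · rintro ⟨hc, hn⟩
        push_neg at hn
        refine ⟨fun j hj => ?_, hc⟩
        simp [Finset.mem_compl, hD]
        exact hn j hj
      · rintro ⟨hs, hc⟩
        refine ⟨hc, ?_⟩
        push_neg
        intro j hj
        have := hs hj
        simpa [Finset.mem_compl, hD] using this
    rw [hB] at h1
    rw [Finset.card_powersetCard, Finset.card_compl] at h1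
    simpa [hA, hC, hd] using h1
  -- the ratio bound
  have hCr : (0:ℝ) < (C:ℝ) := by exact_mod_cast hCpos
  have hArC : (A:ℝ) = (C:ℝ) - ((n-d).choose k : ℝ) := by
    have : (A:ℝ) + ((n-d).choose k : ℝ) = (C:ℝ) := by exact_mod_cast congrArg (Nat.cast : ℕ → ℝ) hAB
    linarith
  clear_value d
  have hratio : (A:ℝ) / (C:ℝ) ≤ 1 - ((1:ℝ) - (t:ℝ)/((n:ℝ)-(k:ℝ)))^k := by
    rw [hArC]
    rw [div_le_iff₀ hCr]
    -- suffices: ((1 - t/(n-k))^k) * C ≤ choose (n-d) k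
    clear hnum hAB hArC hA hd hD
    have key : ((1:ℝ) - (t:ℝ)/((n:ℝ)-(k:ℝ)))^k * (C:ℝ) ≤ ((n-d).choose k : ℝ) := by
      rcases Nat.eq_zero_or_pos k with hk0 | hkpos
      · subst hk0
        simp [hCval]
      · -- k ≥ 1 so t + k ≤ n
        have htk : t + k ≤ n := by
          rcases le_or_gt t n with h | h
          · omega
          · exfalso; omega
        have hdk : d + k ≤ n := by omega
        rcases Nat.lt_or_ge k n with hkn' | hkn'
        · -- k < n, so n - k ≥ 1
          have hnk : (0:ℝ) < (n:ℝ) - (k:ℝ) := by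
            have : (k:ℝ) < (n:ℝ) := by exact_mod_cast hkn'
            linarith
          have hdt : (d:ℝ) ≤ (t:ℝ) := by exact_mod_cast hdist
          have hbase : (1:ℝ) - (t:ℝ)/((n:ℝ)-(k:ℝ)) ≤ ((n:ℝ)-(d:ℝ)-(k:ℝ))/((n:ℝ)-(k:ℝ)) := by
            have h1 : (1:ℝ) - (t:ℝ)/((n:ℝ)-(k:ℝ)) = (((n:ℝ)-(k:ℝ))-(t:ℝ))/((n:ℝ)-(k:ℝ)) := by
              field_simp
            rw [h1, div_le_div_iff₀ hnk hnk]
            nlinarith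
          have hbnn : (0:ℝ) ≤ 1 - (t:ℝ)/((n:ℝ)-(k:ℝ)) := by
            rw [sub_nonneg, div_le_one hnk]
            have : (t:ℝ)+(k:ℝ) ≤ (n:ℝ) := by exact_mod_cast htk
            linarith
          have hcr := choose_ratio n d k hdk
          have hC' : (C:ℝ) = (n.choose k : ℝ) := by exact_mod_cast hCval
          calc ((1:ℝ) - (t:ℝ)/((n:ℝ)-(k:ℝ)))^k * (C:ℝ)
              ≤ (((n:ℝ)-(d:ℝ)-(k:ℝ))/((n:ℝ)-(k:ℝ)))^k * (C:ℝ) :=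
                mul_le_mul_of_nonneg_right (pow_le_pow_left₀ hbnn hbase k) (le_of_lt hCr)
            _ = (((n:ℝ)-(d:ℝ)-(k:ℝ))^k / ((n:ℝ)-(k:ℝ))^k) * (C:ℝ) := by rw [div_pow]
            _ ≤ ((n-d).choose k : ℝ) := by
                rw [div_mul_eq_mul_div, div_le_iff₀ (by positivity)]
                rw [hC']
                linear_combination hcr
        · -- k = n, then t = 0, d = 0
          have hkn2 : k = n := le_antisymm hkn hkn'
          have ht0 : t = 0 := by omega
          have hd0 : d = 0 := by omega
          subst hkn2
          rw [ht0, hd0]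
          simp [hCval]
    calc ((C:ℝ) - ((n-d).choose k : ℝ)) = (C:ℝ) - ((n-d).choose k : ℝ) := rfl
      _ ≤ (C:ℝ) - ((1:ℝ) - (t:ℝ)/((n:ℝ)-(k:ℝ)))^k * (C:ℝ) := by linarith
      _ = (1 - ((1:ℝ) - (t:ℝ)/((n:ℝ)-(k:ℝ)))^k) * (C:ℝ) := by ring
  have hrnn : (0:ℝ) ≤ (A:ℝ)/(C:ℝ) := by positivity
  rw [hnum]
  push_cast
  rw [← div_pow]
  exact pow_le_pow_left₀ hrnn hratio m
end
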